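/- arXiv:1808.07560 — 4 statements merged into one kernel-verified Lean document; each statement's English description precedes it below -/
import Mathlib

section
/- Let h : ℝ → ℝ be three times differentiable, let a(u) = (−h(u)·cos u + h'(u)·sin u, −h(u)·sin u − h'(u)·cos u), set ρ₀ = h(0) + h''(0), and define the osculating circle parameterization c_o(u) = (h''(0) − ρ₀·cos u, −h'(0) − ρ₀·sin u). Then as u → 0, c_o(u) − a(u) = ((h'(0) + h'''(0))/2)·u²·(0, 1) + o(u²); in particular the error vector c_o(u) − a(u) is O(u²) and its quadratic term points in the tangential direction (0,1) at the point p = a(0), so c_o has second order (geometric) contact with a at p. -/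
open Real Asymptotics Filter

/-!
Write `n(u) = (cos u, sin u)` and `t(u) = (sin u, -cos u)`, so that `n' = -t` and `t' = n`.
Then `a = -h • n + h' • t` has `a' = ρ • t` with `ρ = h + h''`, while the circle
`c_o = a*(0) - ρ₀ • n` has `c_o' = ρ₀ • t`. Hence the error `e = c_o - a` satisfies
`e(0) = 0` and `e' = (ρ₀ - ρ) • t`, which vanishes at `0` and has derivative
`ρ'(0) • (0, 1)` there; second-order Taylor expansion with Peano remainder finishes the proof.
-/

theorem isLittleO_sub_taylor_two {E : Type*} [NormedAddCommGroup E] [NormedSpace ℝ E]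
    {f f' : ℝ → E} {v : E} {x₀ : ℝ}
    (hf : ∀ x, HasDerivAt f (f' x) x) (hf' : HasDerivAt f' v x₀) :
    (fun x => f x - f x₀ - (x - x₀) • f' x₀ - ((x - x₀) ^ 2 / 2) • v)
      =o[nhds x₀] fun x => (x - x₀) ^ 2 := by
  have hF : ∀ x, HasDerivAt (fun x => f x - (x - x₀) • f' x₀ - ((x - x₀) ^ 2 / 2) • v)
      (f' x - f' x₀ - (x - x₀) • v) x := by
    intro x
    have hlin := (hasDerivAt_id' x).sub_const x₀
    convert ((hf x).fun_sub (hlin.smul_const (f' x₀))).fun_sub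
      (((hlin.fun_pow 2).div_const 2).smul_const v) using 1
    simp
  have h := Convex.isLittleO_pow_succ_real (n := 1) convex_univ (Set.mem_univ x₀)
    (fun x _ => (hF x).hasDerivWithinAt) (by simpa using hf'.isLittleO)
  simpa [sub_right_comm] using h

noncomputable def radialDir (u : ℝ) : ℝ × ℝ := (cos u, sin u)

noncomputable def tangentDir (u : ℝ) : ℝ × ℝ := (sin u, -cos u)

theorem hasDerivAt_radialDir (x : ℝ) : HasDerivAt radialDir (-tangentDir x) x :=
  ((hasDerivAt_cos x).prodMk (hasDerivAt_sin x)).congr_deriv (by simp [tangentDir])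

theorem hasDerivAt_tangentDir (x : ℝ) : HasDerivAt tangentDir (radialDir x) x :=
  ((hasDerivAt_sin x).prodMk (hasDerivAt_cos x).fun_neg).congr_deriv (by simp [radialDir])

theorem hasDerivAt_circle (c : ℝ × ℝ) (r x : ℝ) :
    HasDerivAt (fun u => c - r • radialDir u) (r • tangentDir x) x := by
  simpa using ((hasDerivAt_radialDir x).const_smul r).const_sub c

theorem hasDerivAt_envelope {h : ℝ → ℝ} {x : ℝ} (hh : DifferentiableAt ℝ h x)
    (hh' : DifferentiableAt ℝ (deriv h) x) :
    HasDerivAt (fun u => -h u • radialDir u + deriv h u • tangentDir u)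
      ((h x + deriv (deriv h) x) • tangentDir x) x := by
  refine (hh.hasDerivAt.fun_neg.smul (hasDerivAt_radialDir x)).fun_add
    (hh'.hasDerivAt.smul (hasDerivAt_tangentDir x)) |>.congr_deriv ?_
  simp only [smul_neg, neg_smul, neg_neg, add_smul]
  abel

theorem hasDerivAt_sub_smul_tangentDir_zero {ρ : ℝ → ℝ} {ρ' : ℝ} (hρ : HasDerivAt ρ ρ' 0) :
    HasDerivAt (fun x => (ρ 0 - ρ x) • tangentDir x) (ρ' • ((0 : ℝ), (1 : ℝ))) 0 :=
  ((hasDerivAt_const (0 : ℝ) (ρ 0)).fun_sub hρ).smul (hasDerivAt_tangentDir 0) |>.congr_deriv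
    (by simp [tangentDir])

/-- For a three times differentiable support function `h`, with envelope curve
`a(u) = (−h·cos u + h'·sin u, −h·sin u − h'·cos u)`, `ρ₀ = h(0) + h''(0)`, and the
osculating circle `c_o(u) = (h''(0) − ρ₀·cos u, −h'(0) − ρ₀·sin u)`, one has, as `u → 0`,
`c_o(u) − a(u) = ((h'(0) + h'''(0))/2)·u²·(0,1) + o(u²)`; in particular the error vector
`c_o(u) − a(u)` is `O(u²)` and its quadratic term points in the tangential direction
`(0,1)` at `p = a(0)`, so `c_o` has second order contact with `a` at `p`. -/
theorem osculating_circle_second_order_contact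
    (h : ℝ → ℝ) (hh : Differentiable ℝ h) (hh' : Differentiable ℝ (deriv h))
    (hh'' : Differentiable ℝ (deriv (deriv h)))
    (a cO : ℝ → ℝ × ℝ) (ρ₀ : ℝ)
    (hρ₀ : ρ₀ = h 0 + deriv (deriv h) 0)
    (ha : a = fun u => (-h u * Real.cos u + deriv h u * Real.sin u,
                        -h u * Real.sin u - deriv h u * Real.cos u))
    (hcO : cO = fun u => (deriv (deriv h) 0 - ρ₀ * Real.cos u,
                          -deriv h 0 - ρ₀ * Real.sin u)) :
    (fun u : ℝ => cO u - a u -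
        ((deriv h 0 + deriv (deriv (deriv h)) 0) / 2 * u ^ 2) • ((0 : ℝ), (1 : ℝ)))
      =o[nhds 0] (fun u : ℝ => u ^ 2) ∧
    (fun u : ℝ => cO u - a u) =O[nhds 0] (fun u : ℝ => u ^ 2) := by
  subst hρ₀
  set c := deriv h 0 + deriv (deriv (deriv h)) 0
  have ha' : a = fun u => -h u • radialDir u + deriv h u • tangentDir u := by
    subst ha; ext u <;> simp [radialDir, tangentDir, sub_eq_add_neg]
  have hcO' : cO = fun u => (deriv (deriv h) 0, -deriv h 0) -
      (h 0 + deriv (deriv h) 0) • radialDir u := by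
    subst hcO; ext u <;> simp [radialDir]
  have he : ∀ x, HasDerivAt (fun u => cO u - a u)
      ((h 0 + deriv (deriv h) 0 - (h x + deriv (deriv h) x)) • tangentDir x) x := fun x => by
    rw [ha', hcO', sub_smul]
    exact (hasDerivAt_circle _ _ x).fun_sub (hasDerivAt_envelope (hh x) (hh' x))
  have he' := hasDerivAt_sub_smul_tangentDir_zero ((hh 0).hasDerivAt.fun_add (hh'' 0).hasDerivAt)
  have he0 : cO 0 - a 0 = 0 := by simp [ha, hcO]
  have taylor := isLittleO_sub_taylor_two he he'
  simp only [he0, sub_self, zero_smul, smul_zero, sub_zero, smul_smul] at taylor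
  have hsmall : (fun u : ℝ => cO u - a u - (c / 2 * u ^ 2) • ((0 : ℝ), (1 : ℝ)))
      =o[nhds 0] (fun u : ℝ => u ^ 2) := by
    refine taylor.congr_left fun u => ?_
    congr 2; ring
  have hquad : (fun u : ℝ => (c / 2 * u ^ 2) • ((0 : ℝ), (1 : ℝ))) =O[nhds 0] fun u : ℝ => u ^ 2 :=
    .of_bound (|c| / 2) (.of_forall fun u => by simp; positivity)
  exact ⟨hsmall, by simpa using hsmall.isBigO.add hquad⟩
end

section
/- Let h : ℝ → ℝ be twice differentiable, k ∈ ℝ, a₃(u) = (−h(u)·cos u + h'(u)·sin u, −h(u)·sin u − h'(u)·cos u, 0), and g(u, v) = a₃(u) + v·(k·cos u, k·sin u, 1). Then for all u, v ∈ ℝ, the cross product of the partial derivatives of g satisfies ∂g/∂u × ∂g/∂v = (h(u) + h''(u) − v·k) · (−cos u, −sin u, k); in particular, wherever g is regular, its surface normal direction is parallel to (cos u, sin u, −k). -/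
open Real

/-- The standard cross product on `ℝ³ = ℝ × ℝ × ℝ`. -/
def cross (a b : ℝ × ℝ × ℝ) : ℝ × ℝ × ℝ :=
  (a.2.1 * b.2.2 - a.2.2 * b.2.1,
   a.2.2 * b.1 - a.1 * b.2.2,
   a.1 * b.2.1 - a.2.1 * b.1)

/-- The point `a₃(u)` where the line `P(u) ∩ {z = 0}` touches its envelope. -/
noncomputable def supportEnvelope (h : ℝ → ℝ) (u : ℝ) : ℝ × ℝ × ℝ :=
  (-h u * cos u + deriv h u * sin u, -h u * sin u - deriv h u * cos u, 0)

noncomputable def coneRuling (k u : ℝ) : ℝ × ℝ × ℝ := (k * cos u, k * sin u, 1)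

lemma cross_smul_left (c : ℝ) (a b : ℝ × ℝ × ℝ) : cross (c • a) b = c • cross a b := by
  simp only [cross, Prod.smul_fst, Prod.smul_snd, Prod.smul_mk, smul_eq_mul, Prod.mk.injEq]
  refine ⟨by ring, by ring, by ring⟩

lemma cross_coneRuling (k u : ℝ) :
    cross (sin u, -cos u, 0) (coneRuling k u) = (-cos u, -sin u, k) := by
  simp only [cross, coneRuling, Prod.mk.injEq]
  refine ⟨by ring, by ring, ?_⟩
  linear_combination k * sin_sq_add_cos_sq u

/-- The tangential terms `±h' cos u`, `±h' sin u` cancel: the envelope moves along the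
normal `(sin u, -cos u)` of its lines, with speed `h + h''`. -/
lemma hasDerivAt_supportEnvelope {h : ℝ → ℝ} {u : ℝ} (hh : DifferentiableAt ℝ h u)
    (hh' : DifferentiableAt ℝ (deriv h) u) :
    HasDerivAt (supportEnvelope h) ((h u + deriv (deriv h) u) • (sin u, -cos u, 0)) u := by
  have hx := (hh.hasDerivAt.neg.mul (hasDerivAt_cos u)).add
    (hh'.hasDerivAt.mul (hasDerivAt_sin u))
  have hy := (hh.hasDerivAt.neg.mul (hasDerivAt_sin u)).sub
    (hh'.hasDerivAt.mul (hasDerivAt_cos u))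
  refine (hx.prodMk (hy.prodMk (hasDerivAt_const u (0 : ℝ)))).congr_deriv ?_
  simp only [Pi.neg_apply, Prod.smul_mk, smul_eq_mul, mul_zero, Prod.mk.injEq]
  refine ⟨by ring, by ring, trivial⟩

lemma hasDerivAt_coneRuling (k u : ℝ) :
    HasDerivAt (coneRuling k) (k • (-sin u, cos u, 0)) u := by
  refine (((hasDerivAt_cos u).const_mul k).prodMk
    (((hasDerivAt_sin u).const_mul k).prodMk (hasDerivAt_const u (1 : ℝ)))).congr_deriv ?_
  simp only [Prod.smul_mk, smul_eq_mul, mul_neg, mul_zero]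

lemma hasDerivAt_supportEnvelope_add_smul_coneRuling {h : ℝ → ℝ} {u : ℝ}
    (hh : DifferentiableAt ℝ h u) (hh' : DifferentiableAt ℝ (deriv h) u) (k v : ℝ) :
    HasDerivAt (fun t => supportEnvelope h t + v • coneRuling k t)
      ((h u + deriv (deriv h) u - v * k) • (sin u, -cos u, 0)) u := by
  refine ((hasDerivAt_supportEnvelope hh hh').add
    ((hasDerivAt_coneRuling k u).const_smul v)).congr_deriv ?_
  simp only [Prod.smul_mk, smul_eq_mul, Prod.mk_add_mk, Prod.mk.injEq]
  refine ⟨by ring, by ring, by ring⟩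

/-- For a twice differentiable support function `h` and conical curvature `k`, the
constant-slope surface `g(u,v) = a₃(u) + v·(k·cos u, k·sin u, 1)` satisfies
`∂g/∂u × ∂g/∂v = (h(u) + h''(u) − v·k) • (−cos u, −sin u, k)`; in particular, wherever `g`
is regular, its surface normal direction is parallel to `(cos u, sin u, −k)`. -/
theorem constant_slope_surface_cross_product_of_partials
    (h : ℝ → ℝ) (hh : Differentiable ℝ h) (hh' : Differentiable ℝ (deriv h)) (k : ℝ)
    (a₃ : ℝ → ℝ × ℝ × ℝ)
    (ha₃ : a₃ = fun u => (-h u * Real.cos u + deriv h u * Real.sin u,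
                          -h u * Real.sin u - deriv h u * Real.cos u, 0))
    (g : ℝ → ℝ → ℝ × ℝ × ℝ)
    (hg : g = fun u v => a₃ u + v • (k * Real.cos u, k * Real.sin u, (1 : ℝ)))
    (u v : ℝ) :
    cross (deriv (fun t => g t v) u) (deriv (fun t => g u t) v) =
      (h u + deriv (deriv h) u - v * k) • (-Real.cos u, -Real.sin u, k) := by
  subst ha₃ hg
  change cross (deriv (fun t => supportEnvelope h t + v • coneRuling k t) u)
    (deriv (fun s => supportEnvelope h u + s • coneRuling k u) v) = _
  have hv : HasDerivAt (fun s => supportEnvelope h u + s • coneRuling k u) (coneRuling k u) v := by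
    simpa only [id, one_smul] using ((hasDerivAt_id v).smul_const (coneRuling k u)).const_add (supportEnvelope h u)
  rw [(hasDerivAt_supportEnvelope_add_smul_coneRuling (hh u) (hh' u) k v).deriv, hv.deriv,
    cross_smul_left, cross_coneRuling]
end

section
/- Let h : ℝ → ℝ be twice differentiable, k ∈ ℝ, a₃(u) = (−h(u)·cos u + h'(u)·sin u, −h(u)·sin u − h'(u)·cos u, 0), and g(u, v) = a₃(u) + v·(k·cos u, k·sin u, 1). Then for every (u, v) with h(u) + h''(u) − v·k ≠ 0, the unit normal n(u, v) = (∂g/∂u × ∂g/∂v) / ‖∂g/∂u × ∂g/∂v‖ satisfies |⟨n(u, v), (0, 0, 1)⟩| = |k| / √(1 + k²); consequently the Gauss image of the regular part of g is contained in the union of the two horizontal planes z = ±k/√(1 + k²), each at distance |k|/√(1 + k²) from the origin: the Gauss image of a surface of constant slope is planar. -/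
/-!
Along the `u`-curve the surface moves by `(h + h'' - v k) • (sin u, -cos u, 0)`, and the ruling
`(k cos u, k sin u, 1)` is the `v`-derivative, so at a regular point the normal is a nonzero
multiple of `(cos u, sin u, -k)`, whose angle with the vertical does not depend on `(u, v)`.
-/

open Real
open scoped RealInnerProductSpace

noncomputable def vec3 (x y z : ℝ) : EuclideanSpace ℝ (Fin 3) :=
  (WithLp.equiv 2 (Fin 3 → ℝ)).symm ![x, y, z]

noncomputable def cross3 (a b : EuclideanSpace ℝ (Fin 3)) : EuclideanSpace ℝ (Fin 3) :=
  vec3 (a 1 * b 2 - a 2 * b 1) (a 2 * b 0 - a 0 * b 2) (a 0 * b 1 - a 1 * b 0)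

section Vec3

@[simp] lemma vec3_apply_zero (x y z : ℝ) : vec3 x y z 0 = x := rfl
@[simp] lemma vec3_apply_one (x y z : ℝ) : vec3 x y z 1 = y := rfl
@[simp] lemma vec3_apply_two (x y z : ℝ) : vec3 x y z 2 = z := rfl

lemma vec3_ext {a b : EuclideanSpace ℝ (Fin 3)} (h₀ : a 0 = b 0) (h₁ : a 1 = b 1)
    (h₂ : a 2 = b 2) : a = b := by
  ext i; fin_cases i <;> assumption

lemma cross3_vec3 (a b c d e f : ℝ) :
    cross3 (vec3 a b c) (vec3 d e f) = vec3 (b * f - c * e) (c * d - a * f) (a * e - b * d) :=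
  rfl

lemma norm_vec3 (x y z : ℝ) : ‖vec3 x y z‖ = √(x ^ 2 + y ^ 2 + z ^ 2) := by
  simp [EuclideanSpace.norm_eq, vec3, Fin.sum_univ_three]

lemma inner_vec3 (x y z a b c : ℝ) :
    ⟪vec3 x y z, vec3 a b c⟫ = x * a + y * b + z * c := by
  simp only [PiLp.inner_apply, Fin.sum_univ_three, vec3_apply_zero, vec3_apply_one,
    vec3_apply_two, RCLike.inner_apply, conj_trivial]
  ring

lemma HasDerivAt.vec3 {x y z : ℝ → ℝ} {x' y' z' u : ℝ} (hx : HasDerivAt x x' u)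
    (hy : HasDerivAt y y' u) (hz : HasDerivAt z z' u) :
    HasDerivAt (fun t => _root_.vec3 (x t) (y t) (z t)) (_root_.vec3 x' y' z') u := by
  have hpi : HasDerivAt (fun t => (![x t, y t, z t] : Fin 3 → ℝ)) ![x', y', z'] u := by
    rw [hasDerivAt_pi]
    intro i; fin_cases i <;> simpa
  exact (PiLp.continuousLinearEquiv 2 ℝ (fun _ : Fin 3 => ℝ)).symm.hasFDerivAt.comp_hasDerivAt
    u hpi

end Vec3

lemma inner_normalize_smul_eq_or {E : Type*} [NormedAddCommGroup E] [InnerProductSpace ℝ E]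
    {c : ℝ} (hc : c ≠ 0) (w e : E) :
    ⟪‖c • w‖⁻¹ • c • w, e⟫ = ⟪w, e⟫ / ‖w‖ ∨ ⟪‖c • w‖⁻¹ • c • w, e⟫ = -(⟪w, e⟫ / ‖w‖) := by
  simp only [real_inner_smul_left, norm_smul, Real.norm_eq_abs, mul_inv]
  rcases hc.lt_or_gt with hneg | hpos
  · right
    rw [abs_of_neg hneg]
    field_simp
  · left
    rw [abs_of_pos hpos]
    field_simp

section ConstantSlope

variable (h : ℝ → ℝ) (k : ℝ)

/-- The plane curve `a₃` with support function `h`. -/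
noncomputable def supportCurve (u : ℝ) : EuclideanSpace ℝ (Fin 3) :=
  vec3 (-h u * cos u + deriv h u * sin u) (-h u * sin u - deriv h u * cos u) 0

noncomputable def rulingDir (u : ℝ) : EuclideanSpace ℝ (Fin 3) :=
  vec3 (k * cos u) (k * sin u) 1

variable {h}

lemma hasDerivAt_supportCurve {u : ℝ} (hh : DifferentiableAt ℝ h u)
    (hh' : DifferentiableAt ℝ (deriv h) u) :
    HasDerivAt (supportCurve h) ((h u + deriv (deriv h) u) • vec3 (sin u) (-cos u) 0) u := by
  have hx := ((hh.hasDerivAt.neg.mul (hasDerivAt_cos u)).add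
    (hh'.hasDerivAt.mul (hasDerivAt_sin u)))
  have hy := ((hh.hasDerivAt.neg.mul (hasDerivAt_sin u)).sub
    (hh'.hasDerivAt.mul (hasDerivAt_cos u)))
  refine (hx.vec3 hy (hasDerivAt_const u 0)).congr_deriv ?_
  apply vec3_ext <;> simp <;> ring

lemma hasDerivAt_rulingDir (u : ℝ) :
    HasDerivAt (rulingDir k) (k • vec3 (-sin u) (cos u) 0) u := by
  refine (((hasDerivAt_cos u).const_mul k).vec3 ((hasDerivAt_sin u).const_mul k)
    (hasDerivAt_const u 1)).congr_deriv ?_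
  apply vec3_ext <;> simp

lemma hasDerivAt_constSlope_fst {u : ℝ} (hh : DifferentiableAt ℝ h u)
    (hh' : DifferentiableAt ℝ (deriv h) u) (v : ℝ) :
    HasDerivAt (fun t => supportCurve h t + v • rulingDir k t)
      ((h u + deriv (deriv h) u - v * k) • vec3 (sin u) (-cos u) 0) u := by
  refine ((hasDerivAt_supportCurve hh hh').add
    ((hasDerivAt_rulingDir k u).const_smul v)).congr_deriv ?_
  apply vec3_ext <;> simp <;> ring

lemma hasDerivAt_constSlope_snd (u v : ℝ) :
    HasDerivAt (fun t => supportCurve h u + t • rulingDir k u) (rulingDir k u) v := by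
  simpa using ((hasDerivAt_id v).smul_const (rulingDir k u)).const_add (supportCurve h u)

lemma cross3_smul_rulingDir (c u : ℝ) :
    cross3 (c • vec3 (sin u) (-cos u) 0) (rulingDir k u) = c • vec3 (-cos u) (-sin u) k := by
  apply vec3_ext
  · simp [cross3, rulingDir]
  · simp [cross3, rulingDir]
  · simp only [cross3, rulingDir, PiLp.smul_apply, smul_eq_mul, vec3_apply_zero, vec3_apply_one,
      vec3_apply_two]
    linear_combination c * k * sin_sq_add_cos_sq u

lemma norm_vec3_cos_sin (u : ℝ) : ‖vec3 (-cos u) (-sin u) k‖ = √(1 + k ^ 2) := by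
  rw [norm_vec3, neg_sq, neg_sq, cos_sq_add_sin_sq]

end ConstantSlope

/-- For a twice differentiable support function `h` and conical curvature `k`, at every
regular point (`h(u) + h''(u) − v·k ≠ 0`) of the constant-slope surface
`g(u,v) = a₃(u) + v·(k·cos u, k·sin u, 1)`, the unit normal
`n = (∂g/∂u × ∂g/∂v)/‖∂g/∂u × ∂g/∂v‖` satisfies `|⟨n, e₃⟩| = |k|/√(1+k²)`; consequently the
Gauss image of the regular part of `g` lies in the union of the two horizontal planes
`z = ±k/√(1+k²)`: the Gauss image of a surface of constant slope is planar. -/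
theorem constant_slope_surface_gauss_image_planar
    (h : ℝ → ℝ) (hh : Differentiable ℝ h) (hh' : Differentiable ℝ (deriv h)) (k : ℝ)
    (a₃ : ℝ → EuclideanSpace ℝ (Fin 3))
    (ha₃ : a₃ = fun u => vec3 (-h u * Real.cos u + deriv h u * Real.sin u)
                              (-h u * Real.sin u - deriv h u * Real.cos u) 0)
    (g : ℝ → ℝ → EuclideanSpace ℝ (Fin 3))
    (hg : g = fun u v => a₃ u + v • vec3 (k * Real.cos u) (k * Real.sin u) 1)
    (u v : ℝ) (hreg : h u + deriv (deriv h) u - v * k ≠ 0)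
    (n : EuclideanSpace ℝ (Fin 3))
    (hn : n = ‖cross3 (deriv (fun t => g t v) u) (deriv (fun t => g u t) v)‖⁻¹ •
              cross3 (deriv (fun t => g t v) u) (deriv (fun t => g u t) v)) :
    |⟪n, vec3 0 0 1⟫| = |k| / Real.sqrt (1 + k ^ 2) ∧
    (⟪n, vec3 0 0 1⟫ = k / Real.sqrt (1 + k ^ 2) ∨
     ⟪n, vec3 0 0 1⟫ = -(k / Real.sqrt (1 + k ^ 2))) := by
  obtain rfl : a₃ = supportCurve h := ha₃
  obtain rfl : g = fun u v => supportCurve h u + v • rulingDir k u := hg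
  rw [(hasDerivAt_constSlope_fst k (hh u) (hh' u) v).deriv,
    (hasDerivAt_constSlope_snd k u v).deriv, cross3_smul_rulingDir] at hn
  have hz := inner_normalize_smul_eq_or hreg (vec3 (-cos u) (-sin u) k) (vec3 0 0 1)
  rw [← hn, norm_vec3_cos_sin, inner_vec3] at hz
  simp only [mul_zero, zero_add, mul_one] at hz
  refine ⟨?_, hz⟩
  have hs : 0 < √(1 + k ^ 2) := by positivity
  rcases hz with hz | hz <;> simp [hz, abs_div, abs_of_pos hs]
end

section
/- Let p be a real polynomial in one variable with deg p ≤ 4. Then the polynomial p − (X/4)·p' has degree at most 3 (the degree-4 terms cancel). Consequently, for a polynomial space curve c : ℝ → ℝ³ of degree at most 4, the tangent surface parameterization x(u, v) = c(u) + (−u/4 + v)·c'(u) is bicubic: each component is a polynomial of degree at most 3 in u and degree at most 1 in v. -/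
open Polynomial

lemma deriv_deg3 (p : Polynomial ℝ) (hp : p.degree ≤ 4) :
    (derivative p).degree ≤ 3 := by
  rw [degree_le_iff_coeff_zero]
  intro m hm
  have hm' : 3 < m := by exact_mod_cast hm
  have h0 : p.coeff (m + 1) = 0 :=
    coeff_eq_zero_of_degree_lt (lt_of_le_of_lt hp (by exact_mod_cast by omega))
  simp [coeff_derivative, h0]

lemma quartic_cancel (p : Polynomial ℝ) (hp : p.degree ≤ 4) :
    (p - C (4 : ℝ)⁻¹ * X * derivative p).degree ≤ 3 := by
  rw [degree_le_iff_coeff_zero]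
  intro m hm
  have hm' : 3 < m := by exact_mod_cast hm
  rcases Nat.lt_or_ge m 5 with h5 | h5
  · have hm4 : m = 4 := by omega
    subst hm4
    simp only [coeff_sub, mul_assoc, coeff_C_mul, coeff_X_mul, coeff_derivative]
    push_cast; ring
  · have h0 : p.coeff m = 0 :=
      coeff_eq_zero_of_degree_lt (lt_of_le_of_lt hp (by exact_mod_cast by omega))
    simp only [coeff_sub, mul_assoc, coeff_C_mul, coeff_X_mul]
    rcases m with _ | m
    · omega
    · have h1 : p.coeff (m + 1) = 0 := h0
      simp [coeff_derivative, h1]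

/-- For a real polynomial `p` of degree at most 4, the polynomial `p − (X/4)·p'` has degree
at most 3 (the degree-4 terms cancel). Consequently, for a polynomial space curve
`c : ℝ → ℝ³` of degree at most 4, the tangent surface parameterization
`x(u,v) = c(u) + (−u/4 + v)·c'(u)` is bicubic: each component is of the form
`q(u) + v·r(u)` with `q, r` polynomials of degree at most 3 (so degree ≤ 3 in `u` and
degree ≤ 1 in `v`). -/
theorem tangent_surface_of_quartic_is_bicubic
    (p : Polynomial ℝ) (hp : p.degree ≤ 4) :
    (p - C (4 : ℝ)⁻¹ * X * derivative p).degree ≤ 3 ∧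
    ∀ c : Fin 3 → Polynomial ℝ, (∀ i, (c i).degree ≤ 4) →
      ∀ i : Fin 3, ∃ q r : Polynomial ℝ, q.degree ≤ 3 ∧ r.degree ≤ 3 ∧
        ∀ u v : ℝ,
          (c i).eval u + (-u / 4 + v) * (derivative (c i)).eval u =
            q.eval u + v * r.eval u := by
  refine ⟨quartic_cancel p hp, ?_⟩
  intro c hc i
  refine ⟨c i - C (4 : ℝ)⁻¹ * X * derivative (c i), derivative (c i),
    quartic_cancel (c i) (hc i), deriv_deg3 (c i) (hc i), ?_⟩
  intro u v
  simp only [eval_sub, eval_mul, eval_C, eval_X]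
  ring
end
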